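/- arXiv:math/0701747 — 3 statements merged into one kernel-verified Lean document; each statement's English description precedes it below -/
import Mathlib

section
/- Let (P^t)_{t≥0} be a Feller Markov semigroup on ℝ^m. Suppose: (i) there exist x_* ∈ ℝ^m, ε_* > 0 and t_* > 0 such that inf over all x, y in the open ball B(x_*, ε_*) of [P^{t_*}(x,·) ∧ P^{t_*}(y,·)](ℝ^m) is strictly positive; (ii) for every R > 0 there exists t(R) > 0 such that x_* belongs to the support of the measure P^{t(R)}(x, ·) for every x with ‖x‖ ≤ R. Then the local Doeblin condition holds: for every R > 0, taking T = t(R) + t_*, one has inf over all x, y with ‖x‖ ≤ R and ‖y‖ ≤ R of [P^{T}(x,·) ∧ P^{T}(y,·)](ℝ^m) strictly positive. -/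
/-!
By the Feller property and the portmanteau theorem, `x ↦ P^{t(R)}(x, B)` is lower semicontinuous
for the open ball `B = B(x_*, ε_*)`; it is positive on the compact ball `‖x‖ ≤ R` by (ii), hence
bounded below there by some `α > 0`. Two chains started in `B` overlap with mass at least `δ > 0`
after time `t_*` by (i), so by Chapman–Kolmogorov two chains started in `‖x‖ ≤ R` overlap with
mass at least `α δ` after time `t(R) + t_*`.
-/

open MeasureTheory Filter Set ProbabilityTheory
open scoped ENNReal NNReal

namespace MeasureTheory.Measure

variable {X : Type*} [MeasurableSpace X] {μ ν : Measure X}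

lemma inf_apply_univ_le_add (μ ν : Measure X) (s : Set X) : (μ ⊓ ν) univ ≤ μ s + ν sᶜ := by
  rw [inf_apply MeasurableSet.univ]
  exact sInf_le ⟨s, by simp⟩

lemma le_inf_apply_univ_of_forall_measurableSet {c : ℝ≥0∞}
    (h : ∀ s, MeasurableSet s → c ≤ μ s + ν sᶜ) : c ≤ (μ ⊓ ν) univ := by
  rw [inf_apply MeasurableSet.univ]
  refine le_sInf ?_
  rintro _ ⟨s, rfl⟩
  calc c ≤ μ (toMeasurable μ s) + ν (toMeasurable μ s)ᶜ := h _ (measurableSet_toMeasurable μ s)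
    _ ≤ μ (s ∩ univ) + ν (sᶜ ∩ univ) := by
      rw [measure_toMeasurable, inter_univ, inter_univ]
      gcongr
      exact subset_toMeasurable μ s

variable {Y : Type*} [MeasurableSpace Y]

lemma mul_le_bind_apply (κ : Kernel X Y) {B : Set X} {s : Set Y} (hs : MeasurableSet s)
    {c : ℝ≥0∞} (hc : ∀ x ∈ B, c ≤ κ x s) : c * μ B ≤ μ.bind κ s :=
  calc c * μ B = ∫⁻ _ in B, c ∂μ := (setLIntegral_const B c).symm
    _ ≤ ∫⁻ x in B, κ x s ∂μ := setLIntegral_mono (κ.measurable_coe hs) hc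
    _ ≤ ∫⁻ x, κ x s ∂μ := setLIntegral_le_lintegral B _
    _ = μ.bind κ s := (bind_apply hs κ.aemeasurable).symm

lemma mul_le_inf_bind_apply_univ (κ : Kernel X Y) {B : Set X} {a δ : ℝ≥0∞}
    (hμ : a ≤ μ B) (hν : a ≤ ν B) (hδ : ∀ x ∈ B, ∀ y ∈ B, δ ≤ (κ x ⊓ κ y) univ) :
    a * δ ≤ (μ.bind κ ⊓ ν.bind κ) univ := by
  refine le_inf_apply_univ_of_forall_measurableSet fun s hs => ?_
  set c₁ := ⨅ x : B, κ x s
  set c₂ := ⨅ y : B, κ y sᶜ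
  have hδc : δ ≤ c₁ + c₂ := by
    rw [ENNReal.iInf_add]
    refine le_iInf fun x => ?_
    rw [ENNReal.add_iInf]
    exact le_iInf fun y => (hδ x x.2 y y.2).trans (inf_apply_univ_le_add _ _ s)
  calc a * δ ≤ a * (c₁ + c₂) := by gcongr
    _ = c₁ * a + c₂ * a := by ring
    _ ≤ c₁ * μ B + c₂ * ν B := by gcongr
    _ ≤ μ.bind κ s + ν.bind κ sᶜ :=
      add_le_add (mul_le_bind_apply κ hs fun x hx => iInf_le_of_le ⟨x, hx⟩ le_rfl)
        (mul_le_bind_apply κ hs.compl fun y hy => iInf_le_of_le ⟨y, hy⟩ le_rfl)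

end MeasureTheory.Measure

namespace ProbabilityTheory.Kernel

variable {X Y : Type*} [TopologicalSpace X] [MeasurableSpace X] [TopologicalSpace Y]
  [MeasurableSpace Y] [OpensMeasurableSpace Y] [HasOuterApproxClosed Y]

lemma lowerSemicontinuous_apply_of_isOpen (κ : Kernel X Y) [IsMarkovKernel κ]
    (hκ : ∀ f : BoundedContinuousFunction Y ℝ, Continuous fun x => ∫ y, f y ∂(κ x))
    {G : Set Y} (hG : IsOpen G) : LowerSemicontinuous fun x => κ x G := by
  let κP : X → ProbabilityMeasure Y := fun x => ⟨κ x, inferInstance⟩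
  have hκP : Continuous κP := ProbabilityMeasure.continuous_iff_forall_continuous_integral.2 hκ
  exact lowerSemicontinuous_iff_le_liminf.2 fun x =>
    ProbabilityMeasure.le_liminf_measure_open_of_tendsto (hκP.tendsto x) hG

end ProbabilityTheory.Kernel

theorem local_Doeblin_condition_general (m : ℕ)
    (P : ℝ≥0 → Kernel (EuclideanSpace ℝ (Fin m)) (EuclideanSpace ℝ (Fin m)))
    (hMarkov : ∀ t, IsMarkovKernel (P t))
    (hCK : ∀ s t : ℝ≥0, ∀ x, P (s + t) x = (P s x).bind (fun y => P t y))
    (hFeller : ∀ (t : ℝ≥0) (f : BoundedContinuousFunction (EuclideanSpace ℝ (Fin m)) ℝ),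
      Continuous fun x => ∫ y, f y ∂(P t x))
    -- (i) local Doeblin condition in a small ball
    (xs : EuclideanSpace ℝ (Fin m)) (εs : ℝ) (ts : ℝ≥0) (hεs : 0 < εs)
    (hglue : 0 < ⨅ (x ∈ Metric.ball xs εs) (y ∈ Metric.ball xs εs),
      (P ts x ⊓ P ts y) univ)
    -- (ii) topological irreducibility: `xs` is in the support of `P (tR R) x` for `‖x‖ ≤ R`
    (tR : ℝ → ℝ≥0)
    (hsupp : ∀ R > (0 : ℝ), 0 < tR R ∧ ∀ x : EuclideanSpace ℝ (Fin m), ‖x‖ ≤ R →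
      ∀ U : Set (EuclideanSpace ℝ (Fin m)), IsOpen U → xs ∈ U → 0 < P (tR R) x U) :
    ∀ R > (0 : ℝ),
      0 < ⨅ (x : EuclideanSpace ℝ (Fin m)) (_ : ‖x‖ ≤ R)
            (y : EuclideanSpace ℝ (Fin m)) (_ : ‖y‖ ≤ R),
          (P (tR R + ts) x ⊓ P (tR R + ts) y) univ := by
  intro R hR
  set B := Metric.ball xs εs
  have hpos : ∀ x, ‖x‖ ≤ R → 0 < P (tR R) x B := fun x hx =>
    (hsupp R hR).2 x hx B Metric.isOpen_ball (Metric.mem_ball_self hεs)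
  have hlsc := (P (tR R)).lowerSemicontinuous_apply_of_isOpen (hFeller _) (G := B)
    Metric.isOpen_ball
  obtain ⟨x₀, hx₀, hmin⟩ := (hlsc.lowerSemicontinuousOn _).exists_isMinOn
    ⟨0, Metric.mem_closedBall_self hR.le⟩ (isCompact_closedBall 0 R)
  have hδ : ∀ z ∈ B, ∀ w ∈ B, (⨅ (x ∈ B) (y ∈ B), (P ts x ⊓ P ts y) univ) ≤
      (P ts z ⊓ P ts w) univ := fun z hz w hw => iInf₂_le_of_le z hz (iInf₂_le w hw)
  refine (ENNReal.mul_pos (hpos x₀ (mem_closedBall_zero_iff.1 hx₀)).ne' hglue.ne').trans_le ?_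
  refine le_iInf₂ fun x hx => le_iInf₂ fun y hy => ?_
  rw [hCK, hCK]
  exact Measure.mul_le_inf_bind_apply_univ (P ts)
    (hmin (mem_closedBall_zero_iff.2 hx)) (hmin (mem_closedBall_zero_iff.2 hy)) hδ

/-- Lemma 3.2 / Theorem 1.3 (final step): if a Feller Markov semigroup satisfies a
local Doeblin condition in a small ball around `xs` (condition derived from **N**) and the
topological irreducibility condition **S**, then the local Doeblin condition **LD** holds
on every bounded region, with `T = t(R) + t_*`. -/
theorem local_Doeblin_condition (m : ℕ)
    (P : ℝ≥0 → Kernel (EuclideanSpace ℝ (Fin m)) (EuclideanSpace ℝ (Fin m)))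
    (hMarkov : ∀ t, IsMarkovKernel (P t))
    (hP0 : ∀ x, P 0 x = Measure.dirac x)
    (hCK : ∀ s t : ℝ≥0, ∀ x, P (s + t) x = (P s x).bind (fun y => P t y))
    (hFeller : ∀ (t : ℝ≥0) (f : BoundedContinuousFunction (EuclideanSpace ℝ (Fin m)) ℝ),
      Continuous fun x => ∫ y, f y ∂(P t x))
    -- (i) local Doeblin condition in a small ball
    (xs : EuclideanSpace ℝ (Fin m)) (εs : ℝ) (ts : ℝ≥0) (hεs : 0 < εs) (hts : 0 < ts)
    (hglue : 0 < ⨅ (x ∈ Metric.ball xs εs) (y ∈ Metric.ball xs εs),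
      (P ts x ⊓ P ts y) univ)
    -- (ii) topological irreducibility: `xs` is in the support of `P (tR R) x` for `‖x‖ ≤ R`
    (tR : ℝ → ℝ≥0)
    (hsupp : ∀ R > (0 : ℝ), 0 < tR R ∧ ∀ x : EuclideanSpace ℝ (Fin m), ‖x‖ ≤ R →
      ∀ U : Set (EuclideanSpace ℝ (Fin m)), IsOpen U → xs ∈ U → 0 < P (tR R) x U) :
    ∀ R > (0 : ℝ),
      0 < ⨅ (x : EuclideanSpace ℝ (Fin m)) (_ : ‖x‖ ≤ R)
            (y : EuclideanSpace ℝ (Fin m)) (_ : ‖y‖ ≤ R),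
          (P (tR R + ts) x ⊓ P (tR R + ts) y) univ :=
  local_Doeblin_condition_general m P hMarkov hCK hFeller xs εs ts hεs hglue tR hsupp
end

section
/- Suppose that on a neighborhood O of a point x_* ∈ ℝ^m the jump coefficient has the form c(x,u) = χ(x)u + δ̃(x,u), where χ ∈ C¹(O, ℝ^{m×d}), ã ∈ C¹(O, ℝ^m), δ̃(·,u) is differentiable in x, and ‖δ̃(x_*,u)‖ + ‖∇_x δ̃(x_*,u)‖ = o(‖u‖) as ‖u‖ → 0. Let A be the m×d matrix A = ∇ã(x_*)·χ(x_*) − Dχ(x_*)[ã(x_*)] (the second term being the derivative of x ↦ χ(x) at x_* in the direction ã(x_*)). Then for all u ∈ ℝ^d of sufficiently small norm one has u ∈ Θ_{x_*} (i.e. I + ∇_x c(x_*,u) is invertible), and Δ̂(x_*, u) = A u + o(‖u‖) as ‖u‖ → 0. -/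
open Filter Asymptotics
open scoped Topology

/-!
Write `B u = ∇ₓc(x_*, u)` and `A` for the linear map of the statement. Differentiating
`c(x,u) = χ(x)u + δ̃(x,u)` gives `B u = Dχ(x_*)[·]u + ∇ₓδ̃(x_*,u) = O(‖u‖)`, so `I + B u` is close to
the identity: it is invertible for small `u` and its inverse tends to `I`. A first-order Taylor
expansion of `ã` at `x_*`, with increment `c(x_*,u) = χ(x_*)u + o(‖u‖)`, gives
`Δ(x_*,u) = A u + o(‖u‖)`; applying `(I + B u)⁻¹ = I + o(1)` to it leaves `A u + o(‖u‖)`.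
-/

section NormedRing

variable {α R : Type*} [NormedRing R] [CompleteSpace R] {l : Filter α} {B : α → R}

theorem eventually_isUnit_one_add (hB : Tendsto B l (𝓝 0)) : ∀ᶠ x in l, IsUnit (1 + B x) := by
  have h1B : Tendsto (fun x => 1 + B x) l (𝓝 1) := by simpa using tendsto_const_nhds.add hB
  exact h1B.eventually (Units.nhds 1)

theorem tendsto_ring_inverse_one_add (hB : Tendsto B l (𝓝 0)) :
    Tendsto (fun x => Ring.inverse (1 + B x)) l (𝓝 1) := by
  have h1B : Tendsto (fun x => 1 + B x) l (𝓝 1) := by simpa using tendsto_const_nhds.add hB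
  have hinv := (NormedRing.inverse_continuousAt (1 : Rˣ)).tendsto
  rw [Units.val_one, Ring.inverse_one] at hinv
  exact hinv.comp h1B

end NormedRing

section Asymptotics

variable {α 𝕜 E F K : Type*} [NontriviallyNormedField 𝕜]
  [NormedAddCommGroup E] [NormedSpace 𝕜 E] [NormedAddCommGroup F] [NormedSpace 𝕜 F]
  [NormedAddCommGroup K] {l : Filter α} {k : α → K}

theorem Asymptotics.IsLittleO.of_norm_add_norm_left {f : α → E} {g : α → F}
    (h : (fun x => ‖f x‖ + ‖g x‖) =o[l] k) : f =o[l] k :=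
  (isBigO_of_le _ fun x => by
    rw [Real.norm_of_nonneg (by positivity)]
    exact le_add_of_nonneg_right (norm_nonneg _)).trans_isLittleO h

theorem Asymptotics.IsLittleO.of_norm_add_norm_right {f : α → E} {g : α → F}
    (h : (fun x => ‖f x‖ + ‖g x‖) =o[l] k) : g =o[l] k :=
  (isBigO_of_le _ fun x => by
    rw [Real.norm_of_nonneg (by positivity)]
    exact le_add_of_nonneg_left (norm_nonneg _)).trans_isLittleO h

theorem Asymptotics.IsBigO.clm_apply_isLittleO {g : α → E →L[𝕜] F} {v : α → E}
    (hg : g =O[l] fun _ => (1 : ℝ)) (hv : v =o[l] k) : (fun x => g x (v x)) =o[l] k :=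
  (isBoundedBilinearMap_apply.isBigO_comp.trans_isLittleO
    (by simpa using hg.norm_left.mul_isLittleO hv.norm_norm)).of_norm_right

theorem Asymptotics.IsLittleO.clm_apply_isBigO {g : α → E →L[𝕜] F} {v : α → E}
    (hg : g =o[l] fun _ => (1 : ℝ)) (hv : v =O[l] k) : (fun x => g x (v x)) =o[l] k :=
  (isBoundedBilinearMap_apply.isBigO_comp.trans_isLittleO
    (by simpa using hg.norm_left.mul_isBigO hv.norm_norm)).of_norm_right

theorem Asymptotics.IsLittleO.ring_inverse_one_add_apply_sub [CompleteSpace F]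
    {B : α → F →L[𝕜] F} (hB : Tendsto B l (𝓝 0)) {f L : α → F}
    (hf : (fun x => f x - L x) =o[l] k) (hL : L =O[l] k) :
    (fun x => Ring.inverse (1 + B x) (f x) - L x) =o[l] k := by
  set g := fun x => Ring.inverse (1 + B x)
  have hg : Tendsto g l (𝓝 1) := tendsto_ring_inverse_one_add hB
  have hg1 : (fun x => g x - 1) =o[l] fun _ => (1 : ℝ) :=
    (isLittleO_one_iff ℝ).2 (by simpa using hg.sub_const 1)
  have hsplit : (fun x => g x (f x) - L x) = fun x => g x (f x - L x) + (g x - 1) (L x) := by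
    funext x
    simp only [map_sub, sub_apply, one_apply_eq_self]
    abel
  rw [hsplit]
  exact ((hg.isBigO_one ℝ).clm_apply_isLittleO hf).add (hg1.clm_apply_isBigO hL)

end Asymptotics

section Calculus

variable {𝕜 E G : Type*} [NontriviallyNormedField 𝕜]
  [NormedAddCommGroup E] [NormedSpace 𝕜 E] [NormedAddCommGroup G] [NormedSpace 𝕜 G]

theorem fderiv_clm_apply_add {χ : E → G →L[𝕜] E} {δ : E → G → E} {x : E} (u : G)
    (hχ : DifferentiableAt 𝕜 χ x) (hδ : DifferentiableAt 𝕜 (fun y => δ y u) x) :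
    fderiv 𝕜 (fun y => χ y u + δ y u) x = (fderiv 𝕜 χ x).flip u + fderiv 𝕜 (fun y => δ y u) x := by
  have h := (hχ.hasFDerivAt.clm_apply (hasFDerivAt_const u x)).add hδ.hasFDerivAt
  exact h.fderiv.trans (by simp)

theorem HasFDerivAt.isLittleO_increment_sub {a : E → E} {T : E →L[𝕜] E} {x : E}
    (ha : HasFDerivAt a T x) (X : G →L[𝕜] E) (M : E →L[𝕜] G →L[𝕜] E) {δ : G → E}
    {D : G → E →L[𝕜] E} (hδ : δ =o[𝓝 0] fun u => u) (hD : D =o[𝓝 0] fun u => u) :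
    (fun u => a (x + (X u + δ u)) - a x - (M.flip u + D u) (a x) - (T.comp X - M (a x)) u)
      =o[𝓝 0] fun u => u := by
  have hh : (fun u => X u + δ u) =O[𝓝 0] fun u => u := (X.isBigO_id _).add hδ.isBigO
  have htaylor : (fun u => a (x + (X u + δ u)) - a x - T (X u + δ u)) =o[𝓝 0] fun u => u :=
    ((hasFDerivAt_iff_isLittleO_nhds_zero.1 ha).comp_tendsto
      (hh.trans_tendsto tendsto_id)).trans_isBigO hh
  have hTδ : (fun u => T (δ u)) =o[𝓝 0] fun u => u := (T.isBigO_comp _ _).trans_isLittleO hδ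
  have hDa : (fun u => D u (a x)) =o[𝓝 0] fun u => u :=
    ((ContinuousLinearMap.apply 𝕜 E (a x)).isBigO_comp D _).trans_isLittleO hD
  refine ((htaylor.add hTδ).sub hDa).congr_left fun u => ?_
  simp only [add_apply, ContinuousLinearMap.flip_apply, sub_apply,
    ContinuousLinearMap.comp_apply, map_add]
  abel

end Calculus

theorem Delta_hat_expansion_general (m d : ℕ)
    (atil : EuclideanSpace ℝ (Fin m) → EuclideanSpace ℝ (Fin m))
    (c : EuclideanSpace ℝ (Fin m) → EuclideanSpace ℝ (Fin d) → EuclideanSpace ℝ (Fin m))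
    (xs : EuclideanSpace ℝ (Fin m)) (O : Set (EuclideanSpace ℝ (Fin m))) (hO : O ∈ 𝓝 xs)
    (χ : EuclideanSpace ℝ (Fin m) →
      (EuclideanSpace ℝ (Fin d) →L[ℝ] EuclideanSpace ℝ (Fin m)))
    (δtil : EuclideanSpace ℝ (Fin m) → EuclideanSpace ℝ (Fin d) → EuclideanSpace ℝ (Fin m))
    (hdecomp : ∀ x ∈ O, ∀ u, c x u = χ x u + δtil x u)
    (hχ : ContDiffOn ℝ 1 χ O) (hatil : ContDiffOn ℝ 1 atil O)
    (hδdiff : ∀ (u : EuclideanSpace ℝ (Fin d)), ∀ x ∈ O,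
      DifferentiableAt ℝ (fun y => δtil y u) x)
    (hlittle : (fun u : EuclideanSpace ℝ (Fin d) =>
        ‖δtil xs u‖ + ‖fderiv ℝ (fun y => δtil y u) xs‖)
      =o[𝓝 0] (fun u : EuclideanSpace ℝ (Fin d) => ‖u‖)) :
    (∃ ε > (0 : ℝ), ∀ u : EuclideanSpace ℝ (Fin d), ‖u‖ < ε →
      IsUnit ((1 : EuclideanSpace ℝ (Fin m) →L[ℝ] EuclideanSpace ℝ (Fin m))
        + fderiv ℝ (fun y => c y u) xs)) ∧
    (fun u : EuclideanSpace ℝ (Fin d) =>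
        (Ring.inverse ((1 : EuclideanSpace ℝ (Fin m) →L[ℝ] EuclideanSpace ℝ (Fin m))
            + fderiv ℝ (fun y => c y u) xs))
          (atil (xs + c xs u) - atil xs - (fderiv ℝ (fun y => c y u) xs) (atil xs))
        - ((fderiv ℝ atil xs).comp (χ xs) - fderiv ℝ χ xs (atil xs)) u)
      =o[𝓝 0] (fun u : EuclideanSpace ℝ (Fin d) => u) := by
  have hxs : xs ∈ O := mem_of_mem_nhds hO
  have hδ := hlittle.of_norm_add_norm_left.of_norm_right
  have hD := hlittle.of_norm_add_norm_right.of_norm_right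
  have hB (u) : fderiv ℝ (fun y => c y u) xs
      = (fderiv ℝ χ xs).flip u + fderiv ℝ (fun y => δtil y u) xs := by
    rw [Filter.EventuallyEq.fderiv_eq (eventually_of_mem hO fun y hy => hdecomp y hy u)]
    exact fderiv_clm_apply_add u ((hχ.contDiffAt hO).differentiableAt one_ne_zero)
      (hδdiff u xs hxs)
  have hB0 : Tendsto (fun u => fderiv ℝ (fun y => c y u) xs) (𝓝 0) (𝓝 0) := by
    simp_rw [hB]
    simpa using ((fderiv ℝ χ xs).flip.continuous.tendsto 0).add (hD.trans_tendsto tendsto_id)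
  obtain ⟨ε, hε, hunit⟩ := Metric.eventually_nhds_iff.1 (eventually_isUnit_one_add hB0)
  refine ⟨⟨ε, hε, fun u hu => hunit (by simpa using hu)⟩, ?_⟩
  have hΔ : (fun u => atil (xs + c xs u) - atil xs - fderiv ℝ (fun y => c y u) xs (atil xs)
      - ((fderiv ℝ atil xs).comp (χ xs) - fderiv ℝ χ xs (atil xs)) u) =o[𝓝 0] fun u => u := by
    simp_rw [hB, hdecomp xs hxs]
    exact ((hatil.contDiffAt hO).differentiableAt one_ne_zero).hasFDerivAt.isLittleO_increment_sub
      (χ xs) (fderiv ℝ χ xs) hδ hD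
  exact hΔ.ring_inverse_one_add_apply_sub hB0 (ContinuousLinearMap.isBigO_id _ _)

/-- Expansion of `Δ̂(x_*, u) = A u + o(‖u‖)` (formula (4.7) in the proof of Proposition 4.3):
if `c(x,u) = χ(x) u + δ̃(x,u)` near `x_*` with `‖δ̃(x_*,u)‖ + ‖∇_x δ̃(x_*,u)‖ = o(‖u‖)`,
then for small `u` the matrix `I + ∇_x c(x_*,u)` is invertible (i.e. `u ∈ Θ_{x_*}`) and
`Δ̂(x_*,u) = A u + o(‖u‖)` with `A = ∇ã(x_*)·χ(x_*) − Dχ(x_*)[ã(x_*)]`. -/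
theorem Delta_hat_expansion (m d : ℕ)
    (atil : EuclideanSpace ℝ (Fin m) → EuclideanSpace ℝ (Fin m))
    (c : EuclideanSpace ℝ (Fin m) → EuclideanSpace ℝ (Fin d) → EuclideanSpace ℝ (Fin m))
    (hcdiff : ∀ (u : EuclideanSpace ℝ (Fin d)) (x : EuclideanSpace ℝ (Fin m)),
      DifferentiableAt ℝ (fun y => c y u) x)
    (xs : EuclideanSpace ℝ (Fin m)) (O : Set (EuclideanSpace ℝ (Fin m))) (hO : O ∈ 𝓝 xs)
    (χ : EuclideanSpace ℝ (Fin m) →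
      (EuclideanSpace ℝ (Fin d) →L[ℝ] EuclideanSpace ℝ (Fin m)))
    (δtil : EuclideanSpace ℝ (Fin m) → EuclideanSpace ℝ (Fin d) → EuclideanSpace ℝ (Fin m))
    (hdecomp : ∀ x ∈ O, ∀ u, c x u = χ x u + δtil x u)
    (hχ : ContDiffOn ℝ 1 χ O) (hatil : ContDiffOn ℝ 1 atil O)
    (hδdiff : ∀ (u : EuclideanSpace ℝ (Fin d)), ∀ x ∈ O,
      DifferentiableAt ℝ (fun y => δtil y u) x)
    (hlittle : (fun u : EuclideanSpace ℝ (Fin d) =>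
        ‖δtil xs u‖ + ‖fderiv ℝ (fun y => δtil y u) xs‖)
      =o[𝓝 0] (fun u : EuclideanSpace ℝ (Fin d) => ‖u‖)) :
    (∃ ε > (0 : ℝ), ∀ u : EuclideanSpace ℝ (Fin d), ‖u‖ < ε →
      IsUnit ((1 : EuclideanSpace ℝ (Fin m) →L[ℝ] EuclideanSpace ℝ (Fin m))
        + fderiv ℝ (fun y => c y u) xs)) ∧
    (fun u : EuclideanSpace ℝ (Fin d) =>
        (Ring.inverse ((1 : EuclideanSpace ℝ (Fin m) →L[ℝ] EuclideanSpace ℝ (Fin m))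
            + fderiv ℝ (fun y => c y u) xs))
          (atil (xs + c xs u) - atil xs - (fderiv ℝ (fun y => c y u) xs) (atil xs))
        - ((fderiv ℝ atil xs).comp (χ xs) - fderiv ℝ χ xs (atil xs)) u)
      =o[𝓝 0] (fun u : EuclideanSpace ℝ (Fin d) => u) :=
  Delta_hat_expansion_general m d atil c xs O hO χ δtil hdecomp hχ hatil hδdiff hlittle
end

section
/- The Markov chain defined by Q is topologically irreducible: for every point z of the circle 𝕋 and every nonempty open subset U ⊆ 𝕋, there exists n ∈ ℕ with Q^n(z, U) > 0. Equivalently, for every z the union over n of the supports of the measures Q^n(z, ·) is dense in 𝕋. -/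
/-!
For `k < 3 ^ n`, choosing the branch `w ↦ (w̄ + d) / 3` at every step along the base-3 digits `d`
of `k` shows that `Q^n(z, ·)` carries mass at least `p ^ n` at the point `(z̄ + k) / 3 ^ n`.
These points form a `3⁻ⁿ`-net of the circle, so every nonempty open set contains one of them
for `n` large.
-/

open MeasureTheory
open scoped ENNReal

/-- The representative in `[0,1)` of a point of the unit circle `𝕋 = ℝ/ℤ`. -/
noncomputable def circleRep (z : UnitAddCircle) : ℝ :=
  ((AddCircle.equivIco 1 0 z : Set.Ico (0 : ℝ) (0 + 1)) : ℝ)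

/-- The Markov kernel `Q(z,·) = (1−3p)·δ_{3z} + p·(δ_{z̄/3} + δ_{(z̄+1)/3} + δ_{(z̄+2)/3})`
on the circle, arithmetic taken modulo 1. -/
noncomputable def Qkern (p : ℝ) (z : UnitAddCircle) : Measure UnitAddCircle :=
  ENNReal.ofReal (1 - 3 * p) • Measure.dirac (((3 * circleRep z : ℝ) : UnitAddCircle))
    + ENNReal.ofReal p •
      (Measure.dirac (((circleRep z / 3 : ℝ) : UnitAddCircle))
        + Measure.dirac ((((circleRep z + 1) / 3 : ℝ) : UnitAddCircle))
        + Measure.dirac ((((circleRep z + 2) / 3 : ℝ) : UnitAddCircle)))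

/-- The `n`-step transition kernel `Q^n`. -/
noncomputable def Qiter (p : ℝ) : ℕ → UnitAddCircle → Measure UnitAddCircle
  | 0, z => Measure.dirac z
  | n + 1, z => (Qiter p n z).bind (Qkern p)

namespace MeasureTheory.Measure

variable {α β : Type*} [MeasurableSpace α] [MeasurableSpace β]

@[fun_prop]
lemma _root_.Measurable.const_smul_measure {f : α → Measure β} (hf : Measurable f) (c : ℝ≥0∞) :
    Measurable fun a => c • f a :=
  measurable_of_measurable_coe _ fun s hs => by
    simp only [smul_apply, smul_eq_mul]
    exact ((measurable_coe hs).comp hf).const_mul c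

lemma bind_mono_left {μ ν : Measure α} (h : μ ≤ ν) {κ : α → Measure β} (hκ : Measurable κ) :
    μ.bind κ ≤ ν.bind κ :=
  le_iff.2 fun s hs => by
    rw [bind_apply hs hκ.aemeasurable, bind_apply hs hκ.aemeasurable]
    exact lintegral_mono' h le_rfl

lemma smul_le_bind_of_smul_dirac_le {μ : Measure α} {c : ℝ≥0∞} {a : α}
    (h : c • dirac a ≤ μ) {κ : α → Measure β} (hκ : Measurable κ) :
    c • κ a ≤ μ.bind κ := by
  simpa only [bind_smul, dirac_bind hκ] using bind_mono_left h hκ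

end MeasureTheory.Measure

lemma measurable_circleRep : Measurable circleRep :=
  measurable_subtype_coe.comp (AddCircle.measurableEquivIco (1:ℝ) 0).measurable

lemma measurable_Qkern (p : ℝ) : Measurable (Qkern p) := by
  have : Measurable ((↑) : ℝ → UnitAddCircle) := AddCircle.measurable_mk'
  have := measurable_circleRep
  unfold Qkern
  fun_prop

lemma circleRep_mem_Ico (z : UnitAddCircle) : circleRep z ∈ Set.Ico (0 : ℝ) 1 := by
  simpa [circleRep] using (AddCircle.equivIco 1 0 z).2

@[simp]
lemma coe_circleRep (z : UnitAddCircle) : ((circleRep z : ℝ) : UnitAddCircle) = z :=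
  (AddCircle.equivIco 1 0).symm_apply_apply z

lemma circleRep_coe {x : ℝ} (hx : x ∈ Set.Ico (0 : ℝ) 1) :
    circleRep ((x : ℝ) : UnitAddCircle) = x := by
  rw [circleRep, AddCircle.coe_equivIco_mk_apply]
  simp [Int.fract_eq_self.mpr hx]

lemma smul_dirac_le_Qkern (p : ℝ) (w : UnitAddCircle) {d : ℕ} (hd : d < 3) :
    ENNReal.ofReal p • Measure.dirac ((((circleRep w + d) / 3 : ℝ) : UnitAddCircle)) ≤
      Qkern p w := by
  refine Measure.le_add_left (smul_le_smul_left _ ?_)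
  interval_cases d
  · simpa using Measure.le_add_right (Measure.le_add_right le_rfl)
  · simpa using Measure.le_add_right (Measure.le_add_left le_rfl)
  · simpa using Measure.le_add_left le_rfl

lemma exists_nat_lt_abs_div_sub_lt {N : ℕ} (hN : 0 < N) {x y : ℝ}
    (hx : x ∈ Set.Ico (0 : ℝ) 1) (hy : y ∈ Set.Ico (0 : ℝ) 1) :
    ∃ k < N, |(x + k) / N - y| < (N : ℝ)⁻¹ := by
  have hN' : (0 : ℝ) < N := Nat.cast_pos.2 hN
  set t := N * y - x with ht_def
  refine ⟨⌊t⌋₊, (Nat.floor_lt' hN.ne').2 (by nlinarith [hx.1, hy.2]), ?_⟩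
  have hkt : |(⌊t⌋₊ : ℝ) - t| < 1 := by
    refine abs_sub_lt_iff.2 ⟨?_, by linarith [Nat.lt_floor_add_one t]⟩
    rcases le_or_gt 0 t with ht | ht
    · linarith [Nat.floor_le ht]
    · rw [Nat.floor_of_nonpos ht.le, Nat.cast_zero]
      nlinarith [hx.2, mul_nonneg hN'.le hy.1]
  rw [show (x + ⌊t⌋₊) / N - y = ((⌊t⌋₊ : ℝ) - t) / N by field_simp; ring, abs_div,
    abs_of_pos hN', ← one_div]
  exact div_lt_div_of_pos_right hkt hN'

lemma smul_dirac_le_Qiter (p : ℝ) (z : UnitAddCircle) (n : ℕ) {k : ℕ} (hk : k < 3 ^ n) :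
    ENNReal.ofReal p ^ n • Measure.dirac ((((circleRep z + k) / 3 ^ n : ℝ) : UnitAddCircle)) ≤
      Qiter p n z := by
  induction n generalizing k with
  | zero =>
    obtain rfl : k = 0 := by simpa using hk
    simp [Qiter]
  | succ n ih =>
    -- the last step appends the leading base-3 digit `d` of `k = 3 ^ n * d + m`
    obtain ⟨d, m, hd, hm, rfl⟩ : ∃ d m, d < 3 ∧ m < 3 ^ n ∧ k = 3 ^ n * d + m :=
      ⟨k / 3 ^ n, k % 3 ^ n, Nat.div_lt_of_lt_mul (by rwa [← pow_succ]),
        Nat.mod_lt _ (by positivity), (Nat.div_add_mod k _).symm⟩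
    set w : UnitAddCircle := (((circleRep z + m) / 3 ^ n : ℝ) : UnitAddCircle)
    have hw : circleRep w = (circleRep z + m) / 3 ^ n := by
      have hx := circleRep_mem_Ico z
      have hm' : (m : ℝ) + 1 ≤ 3 ^ n := by exact_mod_cast hm
      refine circleRep_coe ⟨div_nonneg (add_nonneg hx.1 m.cast_nonneg) (by positivity), ?_⟩
      rw [div_lt_one (by positivity)]
      linarith [hx.2]
    have hstep : (circleRep w + d) / 3 = (circleRep z + (3 ^ n * d + m : ℕ)) / 3 ^ (n + 1) := by
      rw [hw]
      push_cast
      field_simp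
      ring
    calc ENNReal.ofReal p ^ (n + 1) • Measure.dirac
          ((((circleRep z + (3 ^ n * d + m : ℕ)) / 3 ^ (n + 1) : ℝ) : UnitAddCircle))
        = ENNReal.ofReal p ^ n • (ENNReal.ofReal p •
            Measure.dirac ((((circleRep w + d) / 3 : ℝ) : UnitAddCircle))) := by
          rw [hstep, smul_smul, pow_succ]
      _ ≤ ENNReal.ofReal p ^ n • Qkern p w := smul_le_smul_left _ (smul_dirac_le_Qkern p w hd)
      _ ≤ (Qiter p n z).bind (Qkern p) :=
          Measure.smul_le_bind_of_smul_dirac_le (ih hm) (measurable_Qkern p)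

theorem Qiter_topologically_irreducible_general (p : ℝ) (hp : 0 < p)
    (z : UnitAddCircle) (U : Set UnitAddCircle) (hU : IsOpen U) (hUne : U.Nonempty) :
    ∃ n : ℕ, 0 < Qiter p n z U := by
  obtain ⟨u, hu⟩ := hUne
  obtain ⟨ε, hε, hball⟩ : ∃ ε > 0, Metric.ball (circleRep u) ε ⊆ (↑) ⁻¹' U :=
    Metric.isOpen_iff.1 (hU.preimage (AddCircle.continuous_mk' 1)) _ (by simpa using hu)
  obtain ⟨n, hn⟩ := exists_pow_lt_of_lt_one hε (by norm_num : (3 : ℝ)⁻¹ < 1)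
  obtain ⟨k, hk, hclose⟩ :=
    exists_nat_lt_abs_div_sub_lt (pow_pos three_pos n) (circleRep_mem_Ico z) (circleRep_mem_Ico u)
  push_cast at hclose
  have hmem : ((((circleRep z + k) / 3 ^ n : ℝ) : UnitAddCircle)) ∈ U :=
    hball (by rw [Metric.mem_ball, Real.dist_eq]; exact hclose.trans (by rwa [← inv_pow]))
  refine ⟨n, ?_⟩
  calc 0 < ENNReal.ofReal p ^ n := ENNReal.pow_pos (ENNReal.ofReal_pos.2 hp) n
    _ = (ENNReal.ofReal p ^ n •
          Measure.dirac ((((circleRep z + k) / 3 ^ n : ℝ) : UnitAddCircle))) U := by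
      rw [Measure.smul_apply, Measure.dirac_apply_of_mem hmem, smul_eq_mul, mul_one]
    _ ≤ Qiter p n z U := smul_dirac_le_Qiter p z n hk U

/-- Topological irreducibility of the chain `Q` (Example 5.3): from every `z ∈ 𝕋`, every
nonempty open set is reached with positive probability in some number of steps; equivalently,
`⋃_n supp Q^n(z,·)` is dense in `𝕋`. -/
theorem Qiter_topologically_irreducible (p : ℝ) (hp : 0 < p) (hp6 : p < 1 / 6)
    (z : UnitAddCircle) (U : Set UnitAddCircle) (hU : IsOpen U) (hUne : U.Nonempty) :
    ∃ n : ℕ, 0 < Qiter p n z U :=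
  Qiter_topologically_irreducible_general p hp z U hU hUne
end
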